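/- arXiv:2504.20640 — 2 statements merged into one kernel-verified Lean document; each statement's English description precedes it below -/
import Mathlib

section
/- For irrational x ∈ (0,1) and n ≥ 1, one has Θ_{n-1} = Θ_{n+1} + a_{n+1}·√(1 − 4·Θ_n·Θ_{n+1}) − a_{n+1}²·Θ_n. -/
/-- The Gauss map `T(x) = 1/x - ⌊1/x⌋`, with `T(0) = 0`. -/
noncomputable def gaussMap (x : ℝ) : ℝ := if x = 0 then 0 else 1 / x - ⌊1 / x⌋

/-- The `n`-th partial quotient `a_n` of the RCF expansion of `x` (for `n ≥ 1`). -/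
noncomputable def rcfA (x : ℝ) (n : ℕ) : ℤ := ⌊1 / gaussMap^[n - 1] x⌋

/-- Numerators `p_n` of the RCF convergents of `x ∈ (0,1)`. -/
noncomputable def rcfP (x : ℝ) : ℕ → ℤ
  | 0 => 0
  | 1 => 1
  | n + 2 => rcfA x (n + 2) * rcfP x (n + 1) + rcfP x n

/-- Denominators `q_n` of the RCF convergents of `x ∈ (0,1)`. -/
noncomputable def rcfQ (x : ℝ) : ℕ → ℤ
  | 0 => 1
  | 1 => rcfA x 1
  | n + 2 => rcfA x (n + 2) * rcfQ x (n + 1) + rcfQ x n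

/-- Approximation coefficient `Θ_n(x) = q_n² |x - p_n/q_n|`. -/
noncomputable def Theta (x : ℝ) (n : ℕ) : ℝ :=
  (rcfQ x n : ℝ) ^ 2 * |x - (rcfP x n : ℝ) / (rcfQ x n : ℝ)|

namespace JPaux

variable {x : ℝ}

lemma iter_good (hx : x ∈ Set.Ioo (0 : ℝ) 1) (hirr : Irrational x) (k : ℕ) :
    Irrational (gaussMap^[k] x) ∧ gaussMap^[k] x ∈ Set.Ioo (0 : ℝ) 1 := by
  induction k with
  | zero => exact ⟨hirr, hx⟩
  | succ k ih =>
    have hi := ih.1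
    have h0 := ih.2.1
    have h1 := ih.2.2
    rw [Function.iterate_succ_apply']
    set t := gaussMap^[k] x with ht
    have ht0 : t ≠ 0 := ne_of_gt h0
    have hg : gaussMap t = Int.fract (1 / t) := by
      rw [gaussMap, if_neg ht0, Int.fract]
    have hinv : Irrational (1 / t) := by simpa [one_div] using hi.inv
    have hirr' : Irrational (gaussMap t) := by
      rw [hg, Int.fract]; exact hinv.sub_intCast _
    refine ⟨hirr', ?_, ?_⟩
    · rcases lt_or_eq_of_le (Int.fract_nonneg (1 / t)) with h | h
      · rwa [hg]
      · exfalso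
        have : (1 / t) = (⌊1 / t⌋ : ℝ) := by
          have := Int.fract_nonneg (1 / t)
          unfold Int.fract at h
          linarith [h]
        exact hinv.ne_int _ this
    · rw [hg]; exact Int.fract_lt_one _

lemma a_pos (hx : x ∈ Set.Ioo (0 : ℝ) 1) (hirr : Irrational x) (k : ℕ) :
    1 ≤ rcfA x (k + 1) := by
  have h0 := (iter_good hx hirr k).2.1
  have h1 := (iter_good hx hirr k).2.2
  have : (1 : ℝ) ≤ 1 / gaussMap^[k] x := by
    rw [le_div_iff₀ h0]; linarith
  have : (1 : ℤ) ≤ ⌊1 / gaussMap^[k] x⌋ := by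
    exact_mod_cast Int.le_floor.2 (by exact_mod_cast this)
  simpa [rcfA] using this

/-- `t_k * (a_{k+1} + t_{k+1}) = 1`. -/
lemma step_rel (hx : x ∈ Set.Ioo (0 : ℝ) 1) (hirr : Irrational x) (k : ℕ) :
    gaussMap^[k] x * ((rcfA x (k + 1) : ℝ) + gaussMap^[k + 1] x) = 1 := by
  obtain ⟨h0, h1⟩ := (iter_good hx hirr k).2
  have ht0 : gaussMap^[k] x ≠ 0 := ne_of_gt h0
  have hg : gaussMap^[k + 1] x = 1 / gaussMap^[k] x - ⌊1 / gaussMap^[k] x⌋ := by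
    rw [Function.iterate_succ_apply', gaussMap, if_neg ht0]
  have ha : (rcfA x (k + 1) : ℝ) = (⌊1 / gaussMap^[k] x⌋ : ℝ) := by simp [rcfA]
  rw [hg, ha]
  field_simp
  ring

/-- Key identity: `x * (q_{m+1} + q_m t_{m+1}) = p_{m+1} + p_m t_{m+1}`. -/
lemma key (hx : x ∈ Set.Ioo (0 : ℝ) 1) (hirr : Irrational x) (m : ℕ) :
    x * ((rcfQ x (m + 1) : ℝ) + (rcfQ x m : ℝ) * gaussMap^[m + 1] x) =
      (rcfP x (m + 1) : ℝ) + (rcfP x m : ℝ) * gaussMap^[m + 1] x := by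
  induction m with
  | zero =>
    have h := step_rel hx hirr 0
    simp only [Function.iterate_zero_apply] at h
    simp only [rcfP, rcfQ, Int.cast_one, Int.cast_zero]
    linarith [h]
  | succ m ih =>
    have hrel := step_rel hx hirr (m + 1)
    simp only [rcfP, rcfQ]
    push_cast
    push_cast at ih
    linear_combination ((rcfA x (m + 2) : ℝ) + gaussMap^[m + 2] x) * ih -
      (x * (rcfQ x m : ℝ) - (rcfP x m : ℝ)) * hrel

/-- Determinant: `p_{m+1} q_m - p_m q_{m+1} = (-1)^m`. -/
lemma det (x : ℝ) (m : ℕ) :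
    rcfP x (m + 1) * rcfQ x m - rcfP x m * rcfQ x (m + 1) = (-1) ^ m := by
  induction m with
  | zero => simp [rcfP, rcfQ]
  | succ m ih =>
    simp only [rcfP, rcfQ, pow_succ]
    ring_nf
    ring_nf at ih
    linarith [ih]

lemma q_pos (hx : x ∈ Set.Ioo (0 : ℝ) 1) (hirr : Irrational x) (m : ℕ) :
    1 ≤ rcfQ x m ∧ 1 ≤ rcfQ x (m + 1) := by
  induction m with
  | zero => exact ⟨le_refl 1 |>.trans_eq rfl, by simpa [rcfQ] using a_pos hx hirr 0⟩
  | succ m ih =>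
    refine ⟨ih.2, ?_⟩
    have ha := a_pos hx hirr (m + 1)
    simp only [rcfQ]
    nlinarith [ih.1, ih.2]

lemma q_lt (hx : x ∈ Set.Ioo (0 : ℝ) 1) (hirr : Irrational x) (m : ℕ) :
    rcfQ x (m + 1) < rcfQ x (m + 2) := by
  have ha := a_pos hx hirr (m + 1)
  have h1 := (q_pos hx hirr m).1
  have h2 := (q_pos hx hirr m).2
  simp only [rcfQ]
  nlinarith

lemma theta_eq (hx : x ∈ Set.Ioo (0 : ℝ) 1) (hirr : Irrational x) (k : ℕ) :
    Theta x k = (rcfQ x k : ℝ) * |(rcfQ x k : ℝ) * x - (rcfP x k : ℝ)| := by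
  have hq : (0 : ℝ) < (rcfQ x k : ℝ) := by
    exact_mod_cast lt_of_lt_of_le zero_lt_one (q_pos hx hirr k).1
  rw [Theta]
  rw [show x - (rcfP x k : ℝ) / (rcfQ x k : ℝ) =
      ((rcfQ x k : ℝ) * x - (rcfP x k : ℝ)) / (rcfQ x k : ℝ) by
    rw [sub_div, mul_div_cancel_left₀ _ hq.ne']]
  rw [abs_div, abs_of_pos hq, pow_two, mul_assoc, ← mul_div_assoc,
    mul_div_cancel_left₀ _ hq.ne']

/-- Pure algebra core of the identity. -/
lemma alg (a r qA qB qC pA pB pC x ε : ℝ)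
    (hr0 : 0 < r) (hr1 : r < 1) (ha : 1 ≤ a)
    (hqA1 : 1 ≤ qA) (hqB1 : 1 ≤ qB) (hqBC : qB < qC)
    (hkey : x * (qC + qB * r) = pC + pB * r)
    (hεabs : |ε| = 1)
    (hdet : pC * qB - pB * qC = ε)
    (hrecP : pC = a * pB + pA) (hrecQ : qC = a * qB + qA) :
    qA * |qA * x - pA| =
      qC * |qC * x - pC|
        + a * Real.sqrt (1 - 4 * (qB * |qB * x - pB|) * (qC * |qC * x - pC|))
        - a ^ 2 * (qB * |qB * x - pB|) := by
  set D : ℝ := qC + qB * r with hD_def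
  have hD : 0 < D := by nlinarith
  have heB : (qB * x - pB) * D = ε := by linear_combination qB * hkey + hdet
  have heC : (qC * x - pC) * D = -ε * r := by linear_combination qC * hkey - r * hdet
  have heA : (qA * x - pA) * D = -ε * (a + r) := by
    linear_combination heC - a * heB - x * D * hrecQ + D * hrecP
  have habsB : |qB * x - pB| = 1 / D := by
    rw [eq_div_iff hD.ne', ← abs_of_pos hD, ← abs_mul, heB, hεabs]
  have habsC : |qC * x - pC| = r / D := by
    rw [eq_div_iff hD.ne', ← abs_of_pos hD, ← abs_mul, heC, abs_mul, abs_neg, hεabs,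
      abs_of_pos hr0, one_mul]
  have habsA : |qA * x - pA| = (a + r) / D := by
    rw [eq_div_iff hD.ne', ← abs_of_pos hD, ← abs_mul, heA, abs_mul, abs_neg, hεabs,
      abs_of_pos (by linarith : (0 : ℝ) < a + r), one_mul]
  have hsq : 1 - 4 * (qB * |qB * x - pB|) * (qC * |qC * x - pC|)
      = ((qC - qB * r) / D) ^ 2 := by
    rw [habsB, habsC]
    field_simp
    ring
  have hpos : 0 ≤ (qC - qB * r) / D := by
    have : qB * r < qC := by nlinarith
    exact div_nonneg (by linarith) hD.le
  rw [hsq, Real.sqrt_sq hpos, habsA, habsB, habsC]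
  field_simp
  linear_combination (-(a + r)) * hrecQ

end JPaux

theorem jurkat_peyerimhoff_backward (x : ℝ) (hx : x ∈ Set.Ioo (0 : ℝ) 1)
    (hirr : Irrational x) (n : ℕ) (hn : 1 ≤ n) :
    Theta x (n - 1) =
      Theta x (n + 1) + (rcfA x (n + 1) : ℝ) * Real.sqrt (1 - 4 * Theta x n * Theta x (n + 1))
        - (rcfA x (n + 1) : ℝ) ^ 2 * Theta x n := by
  obtain ⟨m, rfl⟩ : ∃ m, n = m + 1 := ⟨n - 1, by omega⟩
  have e2 : m + 1 + 1 = m + 2 := rfl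
  simp only [Nat.add_sub_cancel, e2]
  have hr := (JPaux.iter_good hx hirr (m + 2)).2
  have ha1 : (1 : ℝ) ≤ ((rcfA x (m + 2) : ℤ) : ℝ) := by
    exact_mod_cast JPaux.a_pos hx hirr (m + 1)
  have hqA1 : (1 : ℝ) ≤ ((rcfQ x m : ℤ) : ℝ) := by
    exact_mod_cast (JPaux.q_pos hx hirr m).1
  have hqB1 : (1 : ℝ) ≤ ((rcfQ x (m + 1) : ℤ) : ℝ) := by
    exact_mod_cast (JPaux.q_pos hx hirr m).2
  have hqBC : ((rcfQ x (m + 1) : ℤ) : ℝ) < ((rcfQ x (m + 2) : ℤ) : ℝ) := by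
    exact_mod_cast JPaux.q_lt hx hirr m
  have hkey : x * ((rcfQ x (m + 2) : ℝ) + (rcfQ x (m + 1) : ℝ) * gaussMap^[m + 2] x)
      = (rcfP x (m + 2) : ℝ) + (rcfP x (m + 1) : ℝ) * gaussMap^[m + 2] x := by
    have := JPaux.key hx hirr (m + 1)
    rw [e2] at this
    exact this
  have hεabs : |((-1 : ℝ) ^ (m + 1))| = 1 := by
    rw [abs_pow, abs_neg, abs_one, one_pow]
  have hdet : (rcfP x (m + 2) : ℝ) * (rcfQ x (m + 1) : ℝ)
      - (rcfP x (m + 1) : ℝ) * (rcfQ x (m + 2) : ℝ) = (-1 : ℝ) ^ (m + 1) := by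
    have h := JPaux.det x (m + 1)
    rw [e2] at h
    have h2 : ((rcfP x (m + 2) * rcfQ x (m + 1) - rcfP x (m + 1) * rcfQ x (m + 2) : ℤ) : ℝ)
        = (((-1 : ℤ) ^ (m + 1) : ℤ) : ℝ) := by exact_mod_cast h
    push_cast at h2
    linarith
  have hrecP : (rcfP x (m + 2) : ℝ)
      = (rcfA x (m + 2) : ℝ) * (rcfP x (m + 1) : ℝ) + (rcfP x m : ℝ) := by
    exact_mod_cast (by simp [rcfP] :
      rcfP x (m + 2) = rcfA x (m + 2) * rcfP x (m + 1) + rcfP x m)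
  have hrecQ : (rcfQ x (m + 2) : ℝ)
      = (rcfA x (m + 2) : ℝ) * (rcfQ x (m + 1) : ℝ) + (rcfQ x m : ℝ) := by
    exact_mod_cast (by simp [rcfQ] :
      rcfQ x (m + 2) = rcfA x (m + 2) * rcfQ x (m + 1) + rcfQ x m)
  rw [JPaux.theta_eq hx hirr m, JPaux.theta_eq hx hirr (m + 1), JPaux.theta_eq hx hirr (m + 2)]
  exact JPaux.alg (rcfA x (m + 2) : ℝ) (gaussMap^[m + 2] x) _ _ _ _ _ _ x ((-1 : ℝ) ^ (m + 1))
    hr.1 hr.2 ha1 hqA1 hqB1 hqBC hkey hεabs hdet hrecP hrecQ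
end

section
/- For irrational x ∈ (0,1) and n ≥ 1, max{Θ_{n-1}(x), Θ_n(x), Θ_{n+1}(x)} ≥ 1/√(a_{n+1}² + 4), where a_{n+1} is the (n+1)-st partial quotient of x (Tong's theorem). -/
set_option maxHeartbeats 1000000 in
lemma tong_key (a t V r : ℝ) (ha : 1 ≤ a) (ht : 0 < t) (hat : a*t < 1)
    (hV : 0 < V) (hV1 : V ≤ 1) (hr0 : 0 < r) (hr : r^2 = a^2+4)
    (h1 : V*r < 1+t*V) (h2 : t*r < 1+t*V) (h3 : (a+V)*(1-a*t)*r < 1+t*V) : False := by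
  have ht1 : t < 1 := by nlinarith
  have hD0 : (0:ℝ) < 1 + t*V := by positivity
  have hr2 : 2 < r := by nlinarith
  have hD2 : 1 + t*V < 2 := by nlinarith
  -- quadratic in D
  have hprod : (t*r)*(V*r) < (1+t*V)*(1+t*V) :=
    mul_lt_mul'' h2 h1 (by positivity) (by positivity)
  have hquad : (1+t*V)^2 - r^2*(1+t*V) + r^2 > 0 := by nlinarith
  have hU : 1 + t*V < r*(r+a)/2 := by nlinarith
  have hL : 2*(1+t*V) < r*(r-a) := by
    by_contra h
    push_neg at h
    have e : ((1+t*V) - r*(r-a)/2)*(r*(r+a)/2 - (1+t*V))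
        = -((1+t*V)^2 - r^2*(1+t*V) + r^2) - r^2*(r^2 - a^2 - 4)/4 := by
      ring
    have hm : (0:ℝ) ≤ ((1+t*V) - r*(r-a)/2)*(r*(r+a)/2 - (1+t*V)) :=
      mul_nonneg (by linarith) (by linarith)
    rw [e, hr] at hm
    rw [hr] at hquad
    nlinarith [hm, hquad]
  have hVr : V < (r-a)/2 := by
    have h2Vr : r*(2*V) < r*(r-a) := by nlinarith
    have := lt_of_mul_lt_mul_left h2Vr hr0.le
    linarith
  have h3a : r ≤ 3*a := by nlinarith
  have hw : (a+V)*(r-a-V) ≥ 1 := by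
    have e : (a+V)*(r-a-V) - 1 = (V + (3*a-r)/2)*((r-a)/2 - V) + (r^2 - a^2 - 4)/4 := by ring
    have hm : (0:ℝ) ≤ (V + (3*a-r)/2)*((r-a)/2 - V) :=
      mul_nonneg (by linarith) (by linarith)
    nlinarith [e, hm, hr]
  have h2' : t*(r-V) < 1 := by nlinarith
  have hpos : 0 < r*(a+V) - 1 := by nlinarith
  have c1 : r*a*(a+V) + V ≤ (r*(a+V)-1)*(r-V) := by
    have e : (r*(a+V)-1)*(r-V) - (r*a*(a+V) + V) = r*((a+V)*(r-a-V) - 1) := by ring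
    nlinarith [e, mul_nonneg hr0.le (by linarith : (0:ℝ) ≤ (a+V)*(r-a-V) - 1)]
  have step : t*(r*a*(a+V)+V) ≤ t*((r*(a+V)-1)*(r-V)) :=
    mul_le_mul_of_nonneg_left c1 ht.le
  have hfin : 0 < (r*(a+V)-1)*(1 - t*(r-V)) := mul_pos hpos (by linarith)
  nlinarith [h3, step, hfin]

lemma tong_key_q (a t p q r : ℝ) (ha : 1 ≤ a) (ht : 0 < t) (hat : a*t < 1)
    (hp : 0 < p) (hpq : p ≤ q) (hr0 : 0 < r) (hr : r^2 = a^2+4)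
    (h1 : p*r < q+p*t) (h2 : q*t*r < q+p*t) (h3 : (a*q+p)*(1-a*t)*r < q+p*t) : False := by
  have hq : 0 < q := lt_of_lt_of_le hp hpq
  refine tong_key a t (p/q) r ha ht hat (div_pos hp hq) ((div_le_one hq).mpr hpq) hr0 hr ?_ ?_ ?_
  · rw [show p/q*r = (p*r)/q by ring, show 1+t*(p/q) = (q+p*t)/q by field_simp <;> ring]
    exact (div_lt_div_iff₀ hq hq).mpr (mul_lt_mul_of_pos_right h1 hq)
  · rw [show 1+t*(p/q) = (q+p*t)/q by field_simp <;> ring, show t*r = (q*t*r)/q by field_simp <;> ring]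
    exact (div_lt_div_iff₀ hq hq).mpr (mul_lt_mul_of_pos_right h2 hq)
  · rw [show 1+t*(p/q) = (q+p*t)/q by field_simp <;> ring,
      show (a+p/q)*(1-a*t)*r = ((a*q+p)*(1-a*t)*r)/q by field_simp <;> ring]
    exact (div_lt_div_iff₀ hq hq).mpr (mul_lt_mul_of_pos_right h3 hq)

lemma gauss_step {y : ℝ} (hy : y ∈ Set.Ioo (0:ℝ) 1) (hirr : Irrational y) :
    gaussMap y ∈ Set.Ioo (0:ℝ) 1 ∧ Irrational (gaussMap y) := by
  obtain ⟨h0, h1⟩ := hy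
  have hne : y ≠ 0 := ne_of_gt h0
  have hinv : Irrational (1 / y) := by rw [one_div]; exact hirr.inv
  have hg : gaussMap y = 1/y - ⌊1/y⌋ := by rw [gaussMap, if_neg hne]
  have hfl : (⌊1/y⌋ : ℝ) < 1/y :=
    lt_of_le_of_ne (Int.floor_le _) (fun h => (hinv.ne_int ⌊1/y⌋) h.symm)
  refine ⟨⟨?_, ?_⟩, ?_⟩
  · rw [hg]; linarith
  · rw [hg]; linarith [Int.lt_floor_add_one (1/y)]
  · rw [hg]; exact hinv.sub_intCast _

lemma gauss_iter (x : ℝ) (hx : x ∈ Set.Ioo (0:ℝ) 1) (hirr : Irrational x) (k : ℕ) :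
    gaussMap^[k] x ∈ Set.Ioo (0:ℝ) 1 ∧ Irrational (gaussMap^[k] x) := by
  induction k with
  | zero => exact ⟨hx, hirr⟩
  | succ k ih =>
    rw [Function.iterate_succ_apply']
    exact gauss_step ih.1 ih.2

lemma rcfA_ge_one (x : ℝ) (hx : x ∈ Set.Ioo (0:ℝ) 1) (hirr : Irrational x) (m : ℕ) :
    1 ≤ rcfA x m := by
  obtain ⟨⟨h0, h1⟩, _⟩ := gauss_iter x hx hirr (m - 1)
  rw [rcfA]
  refine Int.le_floor.mpr ?_
  push_cast
  rw [le_div_iff₀ h0]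
  linarith

lemma rcfQ_pos_mono (x : ℝ) (hx : x ∈ Set.Ioo (0:ℝ) 1) (hirr : Irrational x) (n : ℕ) :
    1 ≤ rcfQ x n ∧ rcfQ x n ≤ rcfQ x (n + 1) := by
  induction n with
  | zero =>
    refine ⟨le_refl _, ?_⟩
    show (1:ℤ) ≤ rcfQ x 1
    exact rcfA_ge_one x hx hirr 1
  | succ n ih =>
    obtain ⟨h1, h2⟩ := ih
    have ha := rcfA_ge_one x hx hirr (n + 2)
    constructor
    · linarith
    · show rcfQ x (n+1) ≤ rcfA x (n+2) * rcfQ x (n+1) + rcfQ x n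
      nlinarith

lemma x_identity (x : ℝ) (hx : x ∈ Set.Ioo (0:ℝ) 1) (hirr : Irrational x) (m : ℕ) :
    ((rcfQ x (m+1) : ℝ) + (rcfQ x m : ℝ) * gaussMap^[m+1] x) * x
      = (rcfP x (m+1) : ℝ) + (rcfP x m : ℝ) * gaussMap^[m+1] x := by
  induction m with
  | zero =>
    have hne : x ≠ 0 := ne_of_gt hx.1
    have h1 : gaussMap^[0+1] x = 1/x - (⌊1/x⌋ : ℝ) := by
      rw [show (0+1 : ℕ) = 1 from rfl, Function.iterate_one, gaussMap, if_neg hne]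
    have ha : rcfA x 1 = ⌊1/x⌋ := rfl
    rw [h1, show rcfQ x (0+1) = rcfA x 1 from rfl, ha,
      show rcfQ x 0 = 1 from rfl, show rcfP x (0+1) = 1 from rfl,
      show rcfP x 0 = 0 from rfl]
    push_cast
    field_simp
    ring
  | succ m ih =>
    obtain ⟨⟨ht0, ht1⟩, htirr⟩ := gauss_iter x hx hirr (m+1)
    set t := gaussMap^[m+1] x with hts
    have htne : t ≠ 0 := ne_of_gt ht0
    have hA : rcfA x (m+2) = ⌊1/t⌋ := by rw [hts]; rfl
    have hstep : gaussMap^[m+2] x = 1/t - (rcfA x (m+2) : ℝ) := by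
      rw [show m+2 = (m+1)+1 from rfl, Function.iterate_succ_apply', ← hts, gaussMap,
        if_neg htne, hA]
    have hrel : t * ((rcfA x (m+2) : ℝ) + gaussMap^[m+2] x) = 1 := by
      rw [hstep]; field_simp; ring
    have hQ : (rcfQ x (m+2) : ℝ) = (rcfA x (m+2) : ℝ) * (rcfQ x (m+1) : ℝ) + (rcfQ x m : ℝ) := by
      rw [show rcfQ x (m+2) = rcfA x (m+2) * rcfQ x (m+1) + rcfQ x m from rfl]; push_cast; ring
    have hP : (rcfP x (m+2) : ℝ) = (rcfA x (m+2) : ℝ) * (rcfP x (m+1) : ℝ) + (rcfP x m : ℝ) := by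
      rw [show rcfP x (m+2) = rcfA x (m+2) * rcfP x (m+1) + rcfP x m from rfl]; push_cast; ring
    show ((rcfQ x (m+2) : ℝ) + (rcfQ x (m+1) : ℝ) * gaussMap^[m+2] x) * x
      = (rcfP x (m+2) : ℝ) + (rcfP x (m+1) : ℝ) * gaussMap^[m+2] x
    rw [hQ, hP]
    linear_combination ((rcfA x (m+2) : ℝ) + gaussMap^[m+2] x) * ih
      - ((rcfQ x m : ℝ) * x - (rcfP x m : ℝ)) * hrel

lemma det_identity (x : ℝ) (m : ℕ) :
    rcfP x (m+1) * rcfQ x m - rcfP x m * rcfQ x (m+1) = (-1)^m := by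
  induction m with
  | zero => simp [rcfP, rcfQ]
  | succ m ih =>
    have hQ : rcfQ x (m+2) = rcfA x (m+2) * rcfQ x (m+1) + rcfQ x m := rfl
    have hP : rcfP x (m+2) = rcfA x (m+2) * rcfP x (m+1) + rcfP x m := rfl
    rw [hP, hQ, pow_succ]
    linear_combination (-1 : ℤ) * ih

lemma theta_formula (x : ℝ) (k : ℕ) (hq : 0 < (rcfQ x k : ℝ)) (QR e : ℝ) (hQR : 0 < QR)
    (he : ((rcfQ x k : ℝ)*x - rcfP x k) * QR = e) :
    Theta x k = (rcfQ x k : ℝ) * |e| / QR := by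
  have hqe : (rcfQ x k : ℝ) ≠ 0 := hq.ne'
  have h1 : x - (rcfP x k : ℝ)/(rcfQ x k : ℝ)
      = ((rcfQ x k : ℝ)*x - rcfP x k)/(rcfQ x k : ℝ) := by field_simp <;> ring
  have h2 : (rcfQ x k : ℝ)*x - rcfP x k = e/QR := eq_div_of_mul_eq hQR.ne' he
  rw [Theta, h1, abs_div, abs_of_pos hq, h2, abs_div, abs_of_pos hQR]
  field_simp

theorem tong (x : ℝ) (hx : x ∈ Set.Ioo (0 : ℝ) 1) (hirr : Irrational x)
    (n : ℕ) (hn : 1 ≤ n) :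
    max (max (Theta x (n - 1)) (Theta x n)) (Theta x (n + 1)) ≥
      1 / Real.sqrt ((rcfA x (n + 1) : ℝ) ^ 2 + 4) := by
  obtain ⟨m, rfl⟩ : ∃ m, n = m + 1 := ⟨n - 1, (Nat.succ_pred_eq_of_pos hn).symm⟩
  simp only [Nat.add_sub_cancel]
  -- basic data
  obtain ⟨⟨ht0, ht1⟩, htirr⟩ := gauss_iter x hx hirr (m+1)
  set t := gaussMap^[m+1] x with hts
  have hA : rcfA x (m+1+1) = ⌊1/t⌋ := by rw [hts]; rfl
  have haZ : 1 ≤ rcfA x (m+1+1) := rcfA_ge_one x hx hirr (m+1+1)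
  set a : ℤ := rcfA x (m+1+1) with haa
  have ha1 : (1:ℝ) ≤ (a:ℝ) := by exact_mod_cast haZ
  have hinvirr : Irrational (1/t) := by rw [one_div]; exact htirr.inv
  have haflt : (a:ℝ) < 1/t := by
    rw [hA]
    exact lt_of_le_of_ne (Int.floor_le _) (fun h => (hinvirr.ne_int ⌊1/t⌋) h.symm)
  have hat : (a:ℝ) * t < 1 := by
    have := mul_lt_mul_of_pos_right haflt ht0
    rwa [one_div, inv_mul_cancel₀ ht0.ne'] at this
  -- q facts
  obtain ⟨hQm1, hQmn⟩ := rcfQ_pos_mono x hx hirr m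
  have hQn1 : 1 ≤ rcfQ x (m+1) := le_trans hQm1 hQmn
  have hQm0 : (0:ℝ) < (rcfQ x m : ℝ) := by exact_mod_cast hQm1
  have hQn0 : (0:ℝ) < (rcfQ x (m+1) : ℝ) := by exact_mod_cast hQn1
  have hQmnR : (rcfQ x m : ℝ) ≤ (rcfQ x (m+1) : ℝ) := by exact_mod_cast hQmn
  -- identity and determinant
  have H := x_identity x hx hirr m
  rw [← hts] at H
  have det := det_identity x m
  have detR : (rcfP x (m+1) : ℝ) * (rcfQ x m : ℝ) - (rcfP x m : ℝ) * (rcfQ x (m+1) : ℝ)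
      = (-1:ℝ)^m := by exact_mod_cast det
  set QR := (rcfQ x (m+1) : ℝ) + (rcfQ x m : ℝ) * t with hQRdef
  have hQR : 0 < QR := by positivity
  -- recurrences at m+2
  have hQ2 : (rcfQ x (m+1+1) : ℝ) = (a:ℝ) * (rcfQ x (m+1) : ℝ) + (rcfQ x m : ℝ) := by
    rw [show rcfQ x (m+2) = rcfA x (m+2) * rcfQ x (m+1) + rcfQ x m from rfl]
    push_cast; ring
  have hP2 : (rcfP x (m+1+1) : ℝ) = (a:ℝ) * (rcfP x (m+1) : ℝ) + (rcfP x m : ℝ) := by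
    rw [show rcfP x (m+2) = rcfA x (m+2) * rcfP x (m+1) + rcfP x m from rfl]
    push_cast; ring
  have hQ20 : (0:ℝ) < (rcfQ x (m+1+1) : ℝ) := by rw [hQ2]; nlinarith
  -- the three theta values
  have Tm : Theta x m = (rcfQ x m : ℝ) * 1 / QR := by
    refine theta_formula x m hQm0 QR ((-1:ℝ)^m) hQR ?_ |>.trans (by rw [abs_pow]; simp)
    rw [hQRdef]
    linear_combination (rcfQ x m : ℝ) * H + detR
  have Tn : Theta x (m+1) = (rcfQ x (m+1) : ℝ) * t / QR := by
    refine theta_formula x (m+1) hQn0 QR ((-1:ℝ)^(m+1) * t) hQR ?_ |>.trans ?_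
    · rw [hQRdef, pow_succ]
      linear_combination (rcfQ x (m+1) : ℝ) * H - t * detR
    · rw [abs_mul, abs_pow, abs_of_pos ht0]; simp
  have Tn1 : Theta x (m+1+1) = (rcfQ x (m+1+1) : ℝ) * (1 - (a:ℝ)*t) / QR := by
    refine theta_formula x (m+1+1) hQ20 QR ((-1:ℝ)^m * (1 - (a:ℝ)*t)) hQR ?_ |>.trans ?_
    · rw [hQRdef, hQ2, hP2]
      linear_combination ((a:ℝ) * (rcfQ x (m+1) : ℝ) + (rcfQ x m : ℝ)) * H
        + (1 - (a:ℝ)*t) * detR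
    · rw [abs_mul, abs_pow, abs_of_pos (by linarith : (0:ℝ) < 1 - (a:ℝ)*t)]; simp
  -- contradiction setup
  by_contra hcon
  push_neg at hcon
  set r := Real.sqrt ((a:ℝ)^2 + 4) with hrdef
  have hr0 : 0 < r := Real.sqrt_pos.mpr (by positivity)
  have hr2 : r^2 = (a:ℝ)^2 + 4 := Real.sq_sqrt (by positivity)
  rw [max_lt_iff, max_lt_iff] at hcon
  obtain ⟨⟨c1, c2⟩, c3⟩ := hcon
  rw [Tm] at c1; rw [Tn] at c2; rw [Tn1] at c3
  have d1 : (rcfQ x m : ℝ) * r < QR := by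
    have := (div_lt_div_iff₀ hQR hr0).mp (by rw [mul_one] at c1; exact c1)
    linarith
  have d2 : (rcfQ x (m+1) : ℝ) * t * r < QR := by
    have := (div_lt_div_iff₀ hQR hr0).mp c2
    linarith
  have d3 : ((a:ℝ) * (rcfQ x (m+1) : ℝ) + (rcfQ x m : ℝ)) * (1 - (a:ℝ)*t) * r < QR := by
    have := (div_lt_div_iff₀ hQR hr0).mp c3
    rw [hQ2] at this
    linarith
  exact tong_key_q (a:ℝ) t (rcfQ x m : ℝ) (rcfQ x (m+1) : ℝ) r ha1 ht0 hat hQm0 hQmnR hr0 hr2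
    (by rw [hQRdef] at d1; linarith) (by rw [hQRdef] at d2; linarith)
    (by rw [hQRdef] at d3; linarith)
end
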